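/- The linear map ι from C^n(Σ̂) to Hom_{BM}(I_Σ^{⊗_{S_Σ} n}, I_Σ) defined by ι(f)((σ_0,σ_1)⊗⋯⊗(σ_{n-1},σ_n)) := f(σ_0≤⋯≤σ_n)·(σ_0,σ_n) is a linear isomorphism for each n≥1. -/

import Mathlib

open Finset

variable {K P : Type} [Field K] [Fintype P] [PartialOrder P] [DecidableEq P]
  [DecidableRel ((· ≤ ·) : P → P → Prop)]

abbrev IncPair (P : Type) [PartialOrder P] := {p : P × P // p.1 ≤ p.2}

abbrev Inc (K P : Type) [PartialOrder P] := IncPair P → K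

noncomputable def incMul (f g : Inc K P) : Inc K P := fun q =>
  ∑ b : P, if h : q.1.1 ≤ b ∧ b ≤ q.1.2
    then f ⟨(q.1.1, b), h.1⟩ * g ⟨(b, q.1.2), h.2⟩ else 0

def incBasis (σ τ : P) : Inc K P := fun q => if q.1 = (σ, τ) then 1 else 0

def incOne : Inc K P := fun q => if q.1.1 = q.1.2 then 1 else 0

def Chain (P : Type) [PartialOrder P] (n : ℕ) := {f : Fin (n+1) → P // Monotone f}

noncomputable instance (n : ℕ) : Fintype (Chain P n) :=
  Fintype.ofInjective (fun c : Chain P n => c.1) Subtype.val_injective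

def face {n : ℕ} (i : Fin (n+2)) (c : Chain P (n+1)) : Chain P n :=
  ⟨c.1 ∘ i.succAbove, c.2.comp (Fin.strictMono_succAbove i).monotone⟩

def degen {n : ℕ} (i : Fin (n+1)) (c : Chain P n) : Chain P (n+1) :=
  ⟨c.1 ∘ i.predAbove, c.2.comp (Fin.predAbove_right_monotone i)⟩

open scoped TensorProduct

abbrev TP (K P : Type) [Field K] [PartialOrder P] (n : ℕ) :=
  PiTensorProduct K (fun _ : Fin n => Inc K P)

noncomputable def relators (K P : Type) [Field K] [Fintype P] [PartialOrder P] [DecidableEq P]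
    [DecidableRel ((· ≤ ·) : P → P → Prop)] (n : ℕ) :
    Submodule K (TP K P n) :=
  Submodule.span K { t | ∃ (v : Fin n → Inc K P) (j j' : Fin n) (σ : P),
    (j:ℕ) + 1 = (j':ℕ) ∧
    t = PiTensorProduct.tprod K (Function.update v j (incMul (v j) (incBasis σ σ)))
      - PiTensorProduct.tprod K (Function.update v j' (incMul (incBasis σ σ) (v j'))) }

abbrev Q (K P : Type) [Field K] [Fintype P] [PartialOrder P] [DecidableEq P]
    [DecidableRel ((· ≤ ·) : P → P → Prop)] (n : ℕ) :=
  TP K P n ⧸ relators K P n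

noncomputable def chainVec {n : ℕ} (c : Chain P n) : Fin n → Inc K P :=
  fun i => incBasis (c.1 i.castSucc) (c.1 i.succ)

noncomputable def chainT {n : ℕ} (c : Chain P n) : TP K P n :=
  PiTensorProduct.tprod K (chainVec c)

noncomputable def chainQ {n : ℕ} (c : Chain P n) : Q K P n :=
  Submodule.Quotient.mk (chainT c)

noncomputable def muM {n : ℕ} (c : Chain P n) :
    MultilinearMap K (fun _ : Fin n => Inc K P) (Inc K P) :=
  (MultilinearMap.mkPiRing K (Fin n) (incBasis (c.1 0) (c.1 (Fin.last n)))).compLinearMap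
    (fun i => LinearMap.proj ⟨(c.1 i.castSucc, c.1 i.succ), c.2 (Fin.castSucc_lt_succ : i.castSucc < i.succ).le⟩)

noncomputable def muL {n : ℕ} (c : Chain P n) : TP K P n →ₗ[K] Inc K P :=
  PiTensorProduct.lift (muM c)

noncomputable def iota {n : ℕ} (f : Chain P n → K) : TP K P n →ₗ[K] Inc K P :=
  ∑ c : Chain P n, f c • muL c

/-- The property of being a morphism of `S_Σ`-bimodules `I_Σ^{⊗ n} → I_Σ` that factors through
the relative tensor power `I_Σ^{⊗_{S_Σ} n}`: it kills the relators, and it is equivariant for the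
left and right `S_Σ`-actions (multiplication by the diagonal idempotents on the first,
resp. last, tensor factor). -/
def IsBM {n : ℕ} (g : TP K P (n+1) →ₗ[K] Inc K P) : Prop :=
  relators K P (n+1) ≤ LinearMap.ker g ∧
  (∀ (v : Fin (n+1) → Inc K P) (σ : P),
    g (PiTensorProduct.tprod K (Function.update v 0 (incMul (incBasis σ σ) (v 0)))) =
      incMul (incBasis σ σ) (g (PiTensorProduct.tprod K v))) ∧
  (∀ (v : Fin (n+1) → Inc K P) (σ : P),
    g (PiTensorProduct.tprod K
        (Function.update v (Fin.last n) (incMul (v (Fin.last n)) (incBasis σ σ)))) =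
      incMul (g (PiTensorProduct.tprod K v)) (incBasis σ σ))


/-! Write `e_{στ}` for `incBasis σ τ` and `μ_c` for `muL c`. On the tensor of a chain `c`,
`ι f` takes the value `f c • e_{c₀cₙ}`, and it kills every other tensor of basis vectors. So `f`
is read off as the `(c₀, cₙ)`-coefficient of `ι f` at the chain `c`, which gives injectivity.
Each `μ_c` kills the relators and commutes with the diagonal idempotents, so `ι f` is a bimodule
map. Conversely, let `g` be a bimodule map and take a tensor of basis vectors whose consecutive
pairs fail to compose at `σ`. A relator moves `e_{σσ}` onto the next factor, where it gives
zero, so `g` vanishes on that tensor. On the tensor of a chain `c`, `g` agrees with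
`e_{c₀c₀} g(c) e_{cₙcₙ}`, a multiple of `e_{c₀cₙ}`. So `g` is fixed by its coefficients, and
hence equals `ι` of them. -/

omit [DecidableEq P] in
lemma incMul_smul_left (a : K) (f g : Inc K P) : incMul (a • f) g = a • incMul f g := by
  funext q
  simp [incMul, Finset.mul_sum, mul_assoc]

omit [DecidableEq P] in
lemma incMul_smul_right (a : K) (f g : Inc K P) : incMul f (a • g) = a • incMul f g := by
  funext q
  simp [incMul, Finset.mul_sum, mul_left_comm]

lemma incMul_diag_left_apply (σ : P) (f : Inc K P) (q : IncPair P) :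
    incMul (incBasis σ σ) f q = if q.1.1 = σ then f q else 0 := by
  obtain ⟨⟨a, b⟩, hab⟩ := q
  simp only [incMul, incBasis, Prod.mk.injEq]
  split_ifs with ha
  · subst ha
    rw [Finset.sum_eq_single a (fun x _ hx => by simp [hx]) (by simp)]
    simp [hab]
  · exact Finset.sum_eq_zero fun x _ => by simp [ha]

lemma incMul_diag_right_apply (σ : P) (f : Inc K P) (q : IncPair P) :
    incMul f (incBasis σ σ) q = if q.1.2 = σ then f q else 0 := by
  obtain ⟨⟨a, b⟩, hab⟩ := q
  simp only [incMul, incBasis, Prod.mk.injEq]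
  split_ifs with hb
  · subst hb
    rw [Finset.sum_eq_single b (fun x _ hx => by simp [hx]) (by simp)]
    simp [hab]
  · exact Finset.sum_eq_zero fun x _ => by simp [hb]

lemma incMul_diag_incBasis (σ a b : P) :
    incMul (incBasis σ σ) (incBasis a b) = if a = σ then incBasis a b else (0 : Inc K P) := by
  funext q
  rw [incMul_diag_left_apply, ite_apply]
  simp only [incBasis, Pi.zero_apply, Prod.ext_iff]
  split_ifs <;> grind

lemma incMul_incBasis_diag (σ a b : P) :
    incMul (incBasis a b) (incBasis σ σ) = if b = σ then incBasis a b else (0 : Inc K P) := by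
  funext q
  rw [incMul_diag_right_apply, ite_apply]
  simp only [incBasis, Pi.zero_apply, Prod.ext_iff]
  split_ifs <;> grind

omit [Fintype P] [DecidableRel ((· ≤ ·) : P → P → Prop)] in
lemma incBasis_eq_single (p : IncPair P) :
    incBasis p.1.1 p.1.2 = Pi.single (M := fun _ => K) p 1 := by
  funext q
  simp [incBasis, Pi.single_apply, Subtype.ext_iff]

lemma incMul_corner {a b : P} (hab : a ≤ b) (x : Inc K P) :
    incMul (incMul (incBasis a a) x) (incBasis b b) = x ⟨(a, b), hab⟩ • incBasis a b := by
  funext q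
  obtain ⟨⟨c, d⟩, hcd⟩ := q
  simp only [incMul_diag_right_apply, incMul_diag_left_apply, Pi.smul_apply, smul_eq_mul, incBasis]
  by_cases hc : c = a <;> by_cases hd : d = b <;> simp [hc, hd]

namespace Chain

omit [Fintype P] [DecidableEq P] [DecidableRel ((· ≤ ·) : P → P → Prop)]

def edge {n : ℕ} (c : Chain P n) (i : Fin n) : IncPair P :=
  ⟨(c.1 i.castSucc, c.1 i.succ), c.2 Fin.castSucc_lt_succ.le⟩

lemma ext_edge {n : ℕ} {c c' : Chain P (n+1)} (h : ∀ i, c.edge i = c'.edge i) : c = c' := by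
  apply Subtype.ext
  funext j
  induction j using Fin.lastCases with
  | last => simpa [edge] using congrArg (·.1.2) (h (Fin.last n))
  | cast i => exact congrArg (·.1.1) (h i)

lemma exists_edge_eq {n : ℕ} (p : Fin (n+1) → IncPair P)
    (hp : ∀ i : Fin n, (p i.castSucc).1.2 = (p i.succ).1.1) :
    ∃ c : Chain P (n+1), ∀ i, c.edge i = p i := by
  set v : Fin (n+2) → P := Fin.snoc (fun i => (p i).1.1) (p (Fin.last n)).1.2
  have hv_castSucc (i : Fin (n+1)) : v i.castSucc = (p i).1.1 := Fin.snoc_castSucc ..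
  have hv_succ (i : Fin (n+1)) : v i.succ = (p i).1.2 := by
    induction i using Fin.lastCases with
    | last => simp [v]
    | cast i => rw [Fin.succ_castSucc, hv_castSucc, hp]
  refine ⟨⟨v, Fin.monotone_iff_le_succ.2 fun i => ?_⟩, fun i => Subtype.ext ?_⟩
  · rw [hv_castSucc, hv_succ]; exact (p i).2
  · simp [edge, hv_castSucc, hv_succ]

end Chain

omit [Fintype P] [DecidableRel ((· ≤ ·) : P → P → Prop)] in
lemma chainVec_eq_single {n : ℕ} (c : Chain P n) :
    chainVec (K := K) c = fun i => Pi.single (c.edge i) 1 :=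
  funext fun i => incBasis_eq_single (c.edge i)

section

omit [Fintype P] [DecidableRel ((· ≤ ·) : P → P → Prop)]

lemma muL_tprod {n : ℕ} (c : Chain P n) (v : Fin n → Inc K P) :
    muL c (PiTensorProduct.tprod K v) =
      (∏ i, v i (c.edge i)) • incBasis (c.1 0) (c.1 (Fin.last n)) := by
  simp [muL, muM, Chain.edge]

lemma muL_chainT_self {n : ℕ} (c : Chain P n) :
    muL c (chainT c) = incBasis (K := K) (c.1 0) (c.1 (Fin.last n)) := by
  simp [chainT, muL_tprod, chainVec_eq_single]

lemma muL_chainT_of_ne {n : ℕ} {c c' : Chain P (n+1)} (h : c' ≠ c) :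
    muL c' (chainT c) = (0 : Inc K P) := by
  obtain ⟨i, hi⟩ : ∃ i, c'.edge i ≠ c.edge i := by
    by_contra! h'
    exact h (Chain.ext_edge h')
  rw [chainT, muL_tprod,
    Finset.prod_eq_zero (Finset.mem_univ i) (by simp [chainVec_eq_single, hi]), zero_smul]

lemma muL_tprod_update_of_apply_eq_ite {n : ℕ} (c : Chain P n) (v : Fin n → Inc K P) (j : Fin n)
    (w : Inc K P) (p : Prop) [Decidable p] (hw : w (c.edge j) = if p then v j (c.edge j) else 0) :
    muL c (PiTensorProduct.tprod K (Function.update v j w)) =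
      if p then muL c (PiTensorProduct.tprod K v) else 0 := by
  rw [muL_tprod, muL_tprod]
  split_ifs at hw ⊢ with hp
  · congr 1
    refine Finset.prod_congr rfl fun i _ => ?_
    rcases eq_or_ne i j with rfl | hij <;> simp [*]
  · rw [Finset.prod_eq_zero (Finset.mem_univ j) (by simp [hw]), zero_smul]

end

omit [DecidableRel ((· ≤ ·) : P → P → Prop)] in
lemma iota_chainT {n : ℕ} (f : Chain P (n+1) → K) (c : Chain P (n+1)) :
    iota f (chainT c) = f c • incBasis (c.1 0) (c.1 (Fin.last (n+1))) := by
  rw [iota, LinearMap.sum_apply, Finset.sum_eq_single c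
    (fun c' _ h => by rw [LinearMap.smul_apply, muL_chainT_of_ne h, smul_zero]) (by simp),
    LinearMap.smul_apply, muL_chainT_self]

lemma muL_relator {n : ℕ} (c : Chain P (n+1)) (v : Fin (n+1) → Inc K P) (j j' : Fin (n+1))
    (σ : P) (hjj' : (j : ℕ) + 1 = j') :
    muL c (PiTensorProduct.tprod K (Function.update v j (incMul (v j) (incBasis σ σ)))) =
      muL c (PiTensorProduct.tprod K (Function.update v j' (incMul (incBasis σ σ) (v j')))) := by
  have hj : j.succ = j'.castSucc := Fin.ext (by simp [hjj'])
  rw [muL_tprod_update_of_apply_eq_ite c v j _ (c.1 j.succ = σ) (incMul_diag_right_apply ..),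
    muL_tprod_update_of_apply_eq_ite c v j' _ (c.1 j.succ = σ)
      (by rw [incMul_diag_left_apply, hj]; rfl)]
  rfl

lemma relators_le_ker_muL {n : ℕ} (c : Chain P (n+1)) :
    relators K P (n+1) ≤ LinearMap.ker (muL c) :=
  Submodule.span_le.2 <| by
    rintro _ ⟨v, j, j', σ, hjj', rfl⟩
    simp [muL_relator c v j j' σ hjj']

lemma muL_tprod_update_diag_left {n : ℕ} (c : Chain P (n+1)) (v : Fin (n+1) → Inc K P)
    (σ : P) :
    muL c (PiTensorProduct.tprod K (Function.update v 0 (incMul (incBasis σ σ) (v 0)))) =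
      incMul (incBasis σ σ) (muL c (PiTensorProduct.tprod K v)) := by
  rw [muL_tprod_update_of_apply_eq_ite c v 0 _ (c.1 0 = σ) (incMul_diag_left_apply ..),
    muL_tprod, incMul_smul_right, incMul_diag_incBasis, smul_ite, smul_zero]
  rfl

lemma muL_tprod_update_diag_right {n : ℕ} (c : Chain P (n+1)) (v : Fin (n+1) → Inc K P)
    (σ : P) :
    muL c (PiTensorProduct.tprod K
        (Function.update v (Fin.last n) (incMul (v (Fin.last n)) (incBasis σ σ)))) =
      incMul (muL c (PiTensorProduct.tprod K v)) (incBasis σ σ) := by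
  rw [muL_tprod_update_of_apply_eq_ite c v (Fin.last n) _ (c.1 (Fin.last (n+1)) = σ)
    (incMul_diag_right_apply ..), muL_tprod, incMul_smul_left, incMul_incBasis_diag, smul_ite,
    smul_zero]
  rfl

lemma isBM_iota {n : ℕ} (f : Chain P (n+1) → K) : IsBM (iota f) := by
  refine ⟨fun x hx => ?_, fun v σ => ?_, fun v σ => ?_⟩
  · rw [LinearMap.mem_ker, iota, LinearMap.sum_apply]
    exact Finset.sum_eq_zero fun c _ => by
      rw [LinearMap.smul_apply, LinearMap.mem_ker.1 (relators_le_ker_muL c hx), smul_zero]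
  · funext q
    simp only [iota, LinearMap.sum_apply, LinearMap.smul_apply, muL_tprod_update_diag_left,
      Finset.sum_apply, Pi.smul_apply, incMul_diag_left_apply, smul_ite, smul_zero,
      Finset.sum_ite_irrel, Finset.sum_const_zero]
  · funext q
    simp only [iota, LinearMap.sum_apply, LinearMap.smul_apply, muL_tprod_update_diag_right,
      Finset.sum_apply, Pi.smul_apply, incMul_diag_right_apply, smul_ite, smul_zero,
      Finset.sum_ite_irrel, Finset.sum_const_zero]

noncomputable def chainCoeff {n : ℕ} (g : TP K P n →ₗ[K] Inc K P) (c : Chain P n) : K :=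
  g (chainT c) ⟨(c.1 0, c.1 (Fin.last n)), c.2 (Fin.zero_le _)⟩

omit [DecidableRel ((· ≤ ·) : P → P → Prop)] in
lemma chainCoeff_iota {n : ℕ} (f : Chain P (n+1) → K) : chainCoeff (iota f) = f := by
  funext c
  simp [chainCoeff, iota_chainT, incBasis]

namespace IsBM

variable {n : ℕ} {g : TP K P (n+1) →ₗ[K] Inc K P}

lemma apply_chainT (hg : IsBM g) (c : Chain P (n+1)) :
    g (chainT c) = chainCoeff g c • incBasis (c.1 0) (c.1 (Fin.last (n+1))) := by
  set a := c.1 0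
  set b := c.1 (Fin.last (n+1))
  have hleft : incMul (incBasis a a) (g (chainT c)) = g (chainT c) := by
    have hfirst : incMul (incBasis a a) (chainVec c 0) = chainVec (K := K) c 0 := by
      simp [a, chainVec, incMul_diag_incBasis]
    rw [chainT, ← hg.2.1, hfirst, Function.update_eq_self]
  have hright : incMul (g (chainT c)) (incBasis b b) = g (chainT c) := by
    have hlast : incMul (chainVec c (Fin.last n)) (incBasis b b) =
        chainVec (K := K) c (Fin.last n) := by
      simp [b, chainVec, incMul_incBasis_diag]
    rw [chainT, ← hg.2.2, hlast, Function.update_eq_self]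
  calc g (chainT c) = incMul (incMul (incBasis a a) (g (chainT c))) (incBasis b b) := by
        rw [hleft, hright]
    _ = _ := incMul_corner _ _

lemma apply_tprod_single_eq_zero (hg : IsBM g) (p : Fin (n+1) → IncPair P) (i : Fin n)
    (hi : (p i.castSucc).1.2 ≠ (p i.succ).1.1) :
    g (PiTensorProduct.tprod K fun j => Pi.single (M := fun _ => K) (p j) 1) = 0 := by
  set w : Fin (n+1) → Inc K P := fun j => incBasis (p j).1.1 (p j).1.2
  set σ := (p i.castSucc).1.2
  have hrel := hg.1 (Submodule.subset_span ⟨w, i.castSucc, i.succ, σ, by simp, rfl⟩)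
  have hw : Function.update w i.castSucc (incMul (w i.castSucc) (incBasis σ σ)) = w := by
    simp [w, σ, incMul_incBasis_diag]
  have hw' : incMul (incBasis σ σ) (w i.succ) = 0 := by
    simp [w, incMul_diag_incBasis, Ne.symm hi]
  rw [LinearMap.mem_ker, map_sub, sub_eq_zero, hw, hw', MultilinearMap.map_update_zero,
    map_zero] at hrel
  simpa [w, incBasis_eq_single] using hrel

lemma ext {g' : TP K P (n+1) →ₗ[K] Inc K P} (hg : IsBM g) (hg' : IsBM g')
    (h : chainCoeff g = chainCoeff g') : g = g' := by
  refine PiTensorProduct.ext <| Module.Basis.ext_multilinear (fun _ => Pi.basisFun K (IncPair P))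
    fun p => ?_
  simp only [LinearMap.compMultilinearMap_apply, Pi.basisFun_apply]
  by_cases hp : ∀ i : Fin n, (p i.castSucc).1.2 = (p i.succ).1.1
  · obtain ⟨c, hc⟩ := Chain.exists_edge_eq p hp
    have hchain : (fun i => Pi.single (M := fun _ => K) (p i) 1) = chainVec c := by
      simp [chainVec_eq_single, hc]
    rw [hchain, ← chainT, hg.apply_chainT, hg'.apply_chainT, h]
  · obtain ⟨i, hi⟩ := not_forall.1 hp
    rw [hg.apply_tprod_single_eq_zero p i hi, hg'.apply_tprod_single_eq_zero p i hi]

end IsBM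

/-- For each `n ≥ 1`, the map `ι` defined by
`ι(f)((σ₀,σ₁)⊗⋯⊗(σ_{n-1},σ_n)) = f(σ₀≤⋯≤σ_n)·(σ₀,σ_n)` is a linear isomorphism from
`C^n(Σ̂)` onto `Hom_{BM}(I_Σ^{⊗_{S_Σ}n}, I_Σ)`: it is injective and its image is exactly the
space of `S_Σ`-bimodule morphisms factoring through the relative tensor power. -/
theorem iota_linear_isomorphism (n : ℕ) :
    Function.Injective (fun f : Chain P (n+1) → K => iota f) ∧
    Set.range (fun f : Chain P (n+1) → K => iota f) = {g | IsBM g} ∧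
    ∀ (f : Chain P (n+1) → K) (c : Chain P (n+1)),
      iota f (chainT c) = f c • incBasis (c.1 0) (c.1 (Fin.last (n+1))) := by
  refine ⟨Function.LeftInverse.injective chainCoeff_iota, ?_, iota_chainT⟩
  ext g
  refine ⟨?_, fun hg => ⟨chainCoeff g, (isBM_iota _).ext hg (chainCoeff_iota _)⟩⟩
  rintro ⟨f, rfl⟩
  exact isBM_iota f
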